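/- arXiv:1303.2779 — 6 statements merged into one kernel-verified Lean document; each statement's English description precedes it below -/
import Mathlib

section
/- Let n ≥ 2 be an integer. Let p, q, z be points of ℝ² whose coordinates are integers lying in the interval [0, n]. If p ≠ q and z does not lie on the (affine) line through p and q, then the Euclidean distance from z to the line through p and q is at least (2n² − 2n + 1)^(−1/2). -/
/-!
With `d = q - p` and `w = z - p`, every point of the line is at distance at least
`|d × w| / ‖d‖` from `z`, and for grid points `d × w` is a nonzero integer. So it suffices that
`‖d‖² ≤ (d × w)² (2n² - 2n + 1)`. This is clear from `(d × w)² ≥ 1` unless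
`‖d‖² > 2n² - 2n + 1`, which forces `|d₀| = |d₁| = n`; but then `n ∣ d × w`, so `(d × w)² ≥ n²`,
and `‖d‖² = 2n² ≤ n² (2n² - 2n + 1)` because `n ≥ 2`.
-/

open Metric

lemma Int.sq_add_sq_le_of_abs_le {n a b : ℤ} (ha : |a| ≤ n) (hb : |b| ≤ n)
    (hab : ¬(|a| = n ∧ |b| = n)) : a ^ 2 + b ^ 2 ≤ 2 * n ^ 2 - 2 * n + 1 := by
  rw [← sq_abs a, ← sq_abs b]
  rcases not_and_or.mp hab with h | h
  · have : |a| ≤ n - 1 := by omega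
    nlinarith [abs_nonneg a, abs_nonneg b]
  · have : |b| ≤ n - 1 := by omega
    nlinarith [abs_nonneg a, abs_nonneg b]

lemma Int.sq_add_sq_le_sq_cross_mul {n a b c d : ℤ} (hn : 2 ≤ n) (ha : |a| ≤ n) (hb : |b| ≤ n)
    (hD : a * d - b * c ≠ 0) :
    a ^ 2 + b ^ 2 ≤ (a * d - b * c) ^ 2 * (2 * n ^ 2 - 2 * n + 1) := by
  by_cases hab : |a| = n ∧ |b| = n
  · obtain ⟨ha, hb⟩ := hab
    have hdvd : n ∣ a * d - b * c :=
      dvd_sub ((ha ▸ abs_dvd_self a).mul_right d) ((hb ▸ abs_dvd_self b).mul_right c)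
    have hnD : n ≤ |a * d - b * c| := Int.le_of_dvd (abs_pos.mpr hD) ((dvd_abs _ _).mpr hdvd)
    have hM : 2 ≤ 2 * n ^ 2 - 2 * n + 1 := by nlinarith
    rw [← sq_abs a, ← sq_abs b, ha, hb, ← sq_abs (a * d - b * c)]
    nlinarith [pow_le_pow_left₀ (by omega) hnD 2]
  · have hD1 : 1 ≤ (a * d - b * c) ^ 2 := by
      rw [← sq_abs]; nlinarith [Int.one_le_abs hD]
    nlinarith [Int.sq_add_sq_le_of_abs_le ha hb hab]

namespace EuclideanSpace

def cross (u v : EuclideanSpace ℝ (Fin 2)) : ℝ := u 0 * v 1 - u 1 * v 0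

lemma abs_cross_le (u v : EuclideanSpace ℝ (Fin 2)) : |cross u v| ≤ ‖u‖ * ‖v‖ := by
  refine abs_le_of_sq_le_sq ?_ (by positivity)
  rw [mul_pow, real_norm_sq_eq, real_norm_sq_eq, Fin.sum_univ_two, Fin.sum_univ_two, cross]
  nlinarith [sq_nonneg (u 0 * v 0 + u 1 * v 1)]

lemma exists_smul_eq_of_cross_eq_zero {u v : EuclideanSpace ℝ (Fin 2)} (hu : u ≠ 0)
    (h : cross u v = 0) : ∃ r : ℝ, r • u = v := by
  have hu2 : u 0 ^ 2 + u 1 ^ 2 ≠ 0 := by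
    rwa [← Fin.sum_univ_two (fun i => u i ^ 2), ← real_norm_sq_eq, pow_ne_zero_iff two_ne_zero,
      norm_ne_zero_iff]
  refine ⟨(u 0 * v 0 + u 1 * v 1) / (u 0 ^ 2 + u 1 ^ 2), ?_⟩
  rw [cross] at h
  ext i
  fin_cases i
  · simp only [PiLp.smul_apply, smul_eq_mul, Fin.zero_eta]
    field_simp
    linear_combination u 1 * h
  · simp only [PiLp.smul_apply, smul_eq_mul, Fin.mk_one]
    field_simp
    linear_combination -u 0 * h

lemma cross_ne_zero_of_notMem_affineSpan {p q z : EuclideanSpace ℝ (Fin 2)} (hpq : p ≠ q)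
    (hz : z ∉ line[ℝ, p, q]) : cross (q - p) (z - p) ≠ 0 := by
  intro h
  obtain ⟨r, hr⟩ := exists_smul_eq_of_cross_eq_zero (sub_ne_zero.mpr hpq.symm) h
  have := smul_vsub_vadd_mem_affineSpan_pair r p q
  rw [vsub_eq_sub, hr, vadd_eq_add, sub_add_cancel] at this
  exact hz this

lemma abs_cross_div_norm_le_infDist (p q z : EuclideanSpace ℝ (Fin 2)) :
    |cross (q - p) (z - p)| / ‖q - p‖ ≤ infDist z line[ℝ, p, q] := by
  rw [le_infDist ⟨p, left_mem_affineSpan_pair ℝ p q⟩]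
  intro y hy
  rw [← vsub_vadd y p] at hy
  obtain ⟨r, hr⟩ := vadd_left_mem_affineSpan_pair.mp hy
  have hcross : cross (q - p) (z - p) = cross (q - p) (z - y) := by
    simp only [vsub_eq_sub] at hr
    rw [show z - p = z - y + r • (q - p) by rw [hr]; abel]
    simp only [cross, PiLp.add_apply, PiLp.smul_apply, smul_eq_mul]
    ring
  refine div_le_of_le_mul₀ (norm_nonneg _) dist_nonneg ?_
  rw [hcross, mul_comm, dist_eq_norm]
  exact abs_cross_le _ _

end EuclideanSpace

lemma Real.inv_sqrt_le_abs_div {x y M : ℝ} (hM : 0 < M) (hx : 0 < x) (h : x ^ 2 ≤ y ^ 2 * M) :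
    (√M)⁻¹ ≤ |y| / x := by
  rw [le_div_iff₀ hx, inv_mul_le_iff₀ (Real.sqrt_pos.2 hM), ← Real.sqrt_sq_eq_abs,
    ← Real.sqrt_mul' _ (sq_nonneg _)]
  exact Real.le_sqrt_of_sq_le (by linarith)

open EuclideanSpace

/-- **Lemma 4 (lower bound).** In an `n × n` grid (`n ≥ 2`), the distance from a grid
point `z` not on the line `l` through two distinct grid points `p, q` is at least
`(2n² - 2n + 1)^(-1/2)`. -/
theorem point_line_grid_dist_lower_bound (n : ℕ) (hn : 2 ≤ n)
    (p q z : EuclideanSpace ℝ (Fin 2))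
    (hp : ∀ i, ∃ k : ℤ, 0 ≤ k ∧ k ≤ (n : ℤ) ∧ p i = (k : ℝ))
    (hq : ∀ i, ∃ k : ℤ, 0 ≤ k ∧ k ≤ (n : ℤ) ∧ q i = (k : ℝ))
    (hz : ∀ i, ∃ k : ℤ, 0 ≤ k ∧ k ≤ (n : ℤ) ∧ z i = (k : ℝ))
    (hpq : p ≠ q)
    (hzl : z ∉ affineSpan ℝ ({p, q} : Set (EuclideanSpace ℝ (Fin 2)))) :
    Metric.infDist z (affineSpan ℝ ({p, q} : Set (EuclideanSpace ℝ (Fin 2))) : Set (EuclideanSpace ℝ (Fin 2)))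
      ≥ (Real.sqrt (2 * (n : ℝ) ^ 2 - 2 * n + 1))⁻¹ := by
  choose a ha0 han ha using hp
  choose b hb0 hbn hb using hq
  choose c _ _ hc using hz
  have hcross : cross (q - p) (z - p) =
      (((b 0 - a 0) * (c 1 - a 1) - (b 1 - a 1) * (c 0 - a 0) : ℤ) : ℝ) := by
    simp only [cross, PiLp.sub_apply, ha, hb, hc]
    push_cast
    ring
  have hnorm : ‖q - p‖ ^ 2 = (((b 0 - a 0) ^ 2 + (b 1 - a 1) ^ 2 : ℤ) : ℝ) := by
    simp only [real_norm_sq_eq, Fin.sum_univ_two, PiLp.sub_apply, ha, hb]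
    push_cast
    ring
  have hcross_ne := cross_ne_zero_of_notMem_affineSpan hpq hzl
  rw [hcross, Int.cast_ne_zero] at hcross_ne
  have hbound := Int.sq_add_sq_le_sq_cross_mul (n := n) (by exact_mod_cast hn)
    (abs_sub_le_of_nonneg_of_le (hb0 0) (hbn 0) (ha0 0) (han 0))
    (abs_sub_le_of_nonneg_of_le (hb0 1) (hbn 1) (ha0 1) (han 1)) hcross_ne
  have hn' : (2 : ℝ) ≤ n := by exact_mod_cast hn
  rw [ge_iff_le]
  calc (√(2 * (n : ℝ) ^ 2 - 2 * n + 1))⁻¹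
      ≤ |cross (q - p) (z - p)| / ‖q - p‖ := by
        refine Real.inv_sqrt_le_abs_div (by nlinarith)
          (norm_pos_iff.mpr (sub_ne_zero.mpr hpq.symm)) ?_
        rw [hnorm, hcross]
        exact_mod_cast hbound
    _ ≤ _ := abs_cross_div_norm_le_infDist p q z
end

section
/- Let n ≥ 1 be an integer and let p, q, r be points of ℝ² with integer coordinates in [0, n], such that the vectors q − p and r − p are linearly independent over ℝ (i.e., the lines through p,q and through p,r are distinct). Let θ ∈ [0, π] be the angle between the vectors q − p and r − p. Then min(θ, π − θ) > 2·arctan(1/(6n²)). -/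
/-!
For grid points `p, q, r`, the vectors `u = q - p` and `v = r - p` have integer coordinates of
absolute value at most `n`. Their cross product `u₀v₁ - u₁v₀` is a nonzero integer by linear
independence, and its absolute value is `sin θ ‖u‖ ‖v‖`; as `‖u‖ ‖v‖ ≤ 2n²`, this gives
`sin θ ≥ 1/(2n²)`. Both `θ` and `π - θ` are at least `sin θ`, while
`2 arctan t ≤ 2t < 3t = 1/(2n²)` for `t = 1/(6n²)`.
-/

open Real InnerProductGeometry

def IsGridPoint {ι : Type*} (n : ℕ) (p : EuclideanSpace ℝ ι) : Prop :=
  ∀ i, ∃ k : ℤ, 0 ≤ k ∧ k ≤ (n : ℤ) ∧ p i = (k : ℝ)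

namespace IsGridPoint

variable {ι : Type*} {n : ℕ} {p q : EuclideanSpace ℝ ι}

lemma exists_int_sub_apply (hp : IsGridPoint n p) (hq : IsGridPoint n q) (i : ι) :
    ∃ k : ℤ, (q - p) i = k := by
  obtain ⟨a, -, -, ha⟩ := hp i
  obtain ⟨b, -, -, hb⟩ := hq i
  exact ⟨b - a, by rw [PiLp.sub_apply, ha, hb, Int.cast_sub]⟩

lemma abs_sub_apply_le (hp : IsGridPoint n p) (hq : IsGridPoint n q) (i : ι) :
    |(q - p) i| ≤ n := by
  obtain ⟨a, ha₀, han, ha⟩ := hp i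
  obtain ⟨b, hb₀, hbn, hb⟩ := hq i
  have h : |b - a| ≤ (n : ℤ) := abs_le.2 ⟨by omega, by omega⟩
  rw [PiLp.sub_apply, ha, hb]
  -- coordinates live in `(fun _ => ℝ) i`, which `norm_cast` does not recognise as `ℝ`
  beta_reduce
  exact_mod_cast h

end IsGridPoint

namespace EuclideanSpace

lemma norm_sq_le_card_mul_sq {ι : Type*} [Fintype ι] {x : EuclideanSpace ℝ ι} {c : ℝ}
    (h : ∀ i, |x i| ≤ c) : ‖x‖ ^ 2 ≤ Fintype.card ι * c ^ 2 := by
  rw [real_norm_sq_eq, ← nsmul_eq_mul, ← Finset.card_univ]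
  refine Finset.sum_le_card_nsmul _ _ _ fun i _ => ?_
  rw [← sq_abs]
  exact pow_le_pow_left₀ (abs_nonneg _) (h i) 2

lemma linearIndependent_pair_iff_det_ne_zero {x y : EuclideanSpace ℝ (Fin 2)} :
    LinearIndependent ℝ ![x, y] ↔ x 0 * y 1 - x 1 * y 0 ≠ 0 := by
  have hrows : WithLp.linearEquiv 2 ℝ (Fin 2 → ℝ) ∘ ![x, y] = Matrix.row !![x 0, x 1; y 0, y 1] := by
    ext i j
    fin_cases i <;> fin_cases j <;> rfl
  rw [← LinearMap.linearIndependent_iff_of_injOn (WithLp.linearEquiv 2 ℝ (Fin 2 → ℝ)).toLinearMap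
    (WithLp.linearEquiv 2 ℝ (Fin 2 → ℝ)).injective.injOn, LinearEquiv.coe_coe, hrows,
    Matrix.linearIndependent_rows_iff_isUnit, Matrix.isUnit_iff_isUnit_det, Matrix.det_fin_two_of,
    isUnit_iff_ne_zero]

lemma sin_angle_mul_norm_mul_norm_eq_abs_det (x y : EuclideanSpace ℝ (Fin 2)) :
    sin (angle x y) * (‖x‖ * ‖y‖) = |x 0 * y 1 - x 1 * y 0| := by
  rw [sin_angle_mul_norm_mul_norm, ← sqrt_sq_eq_abs]
  congr 1
  simp only [inner_eq_star_dotProduct, dotProduct, Fin.sum_univ_two, Pi.star_apply, star_trivial]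
  ring

lemma one_le_two_mul_sq_mul_sin_angle {x y : EuclideanSpace ℝ (Fin 2)} {c : ℝ}
    (hxℤ : ∀ i, ∃ k : ℤ, x i = k) (hyℤ : ∀ i, ∃ k : ℤ, y i = k)
    (hxc : ∀ i, |x i| ≤ c) (hyc : ∀ i, |y i| ≤ c) (hxy : LinearIndependent ℝ ![x, y]) :
    1 ≤ 2 * c ^ 2 * sin (angle x y) := by
  have hdet : 1 ≤ |x 0 * y 1 - x 1 * y 0| := by
    have hne := linearIndependent_pair_iff_det_ne_zero.1 hxy
    obtain ⟨a₀, ha₀⟩ := hxℤ 0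
    obtain ⟨a₁, ha₁⟩ := hxℤ 1
    obtain ⟨b₀, hb₀⟩ := hyℤ 0
    obtain ⟨b₁, hb₁⟩ := hyℤ 1
    rw [ha₀, ha₁, hb₀, hb₁] at hne ⊢
    beta_reduce at hne ⊢
    exact_mod_cast Int.one_le_abs (z := a₀ * b₁ - a₁ * b₀) (by exact_mod_cast hne)
  have hnorm : ‖x‖ * ‖y‖ ≤ 2 * c ^ 2 := by
    have hx := norm_sq_le_card_mul_sq hxc
    have hy := norm_sq_le_card_mul_sq hyc
    rw [Fintype.card_fin, Nat.cast_two] at hx hy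
    have hsq : (‖x‖ * ‖y‖) ^ 2 ≤ (2 * c ^ 2) ^ 2 := by
      rw [mul_pow, sq (2 * c ^ 2)]
      exact mul_le_mul hx hy (sq_nonneg _) (by positivity)
    exact (pow_le_pow_iff_left₀ (by positivity) (by positivity) two_ne_zero).1 hsq
  calc 1 ≤ |x 0 * y 1 - x 1 * y 0| := hdet
    _ = sin (angle x y) * (‖x‖ * ‖y‖) := (sin_angle_mul_norm_mul_norm_eq_abs_det x y).symm
    _ ≤ sin (angle x y) * (2 * c ^ 2) := by gcongr; exact sin_angle_nonneg x y
    _ = 2 * c ^ 2 * sin (angle x y) := mul_comm _ _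

end EuclideanSpace

lemma Real.arctan_le_self {t : ℝ} (ht : 0 ≤ t) : arctan t ≤ t := by
  simpa using le_tan (arctan_nonneg.2 ht) (arctan_lt_pi_div_two t)

lemma Real.sin_le_min_self_pi_sub {θ : ℝ} (h₀ : 0 ≤ θ) (hπ : θ ≤ π) : sin θ ≤ min θ (π - θ) :=
  le_min (sin_le h₀) (sin_pi_sub θ ▸ sin_le (sub_nonneg.2 hπ))

theorem grid_line_angle_lower_bound_general (n : ℕ)
    (p q r : EuclideanSpace ℝ (Fin 2))
    (hp : ∀ i, ∃ k : ℤ, 0 ≤ k ∧ k ≤ (n : ℤ) ∧ p i = (k : ℝ))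
    (hq : ∀ i, ∃ k : ℤ, 0 ≤ k ∧ k ≤ (n : ℤ) ∧ q i = (k : ℝ))
    (hr : ∀ i, ∃ k : ℤ, 0 ≤ k ∧ k ≤ (n : ℤ) ∧ r i = (k : ℝ))
    (hli : LinearIndependent ℝ ![q - p, r - p]) :
    min (InnerProductGeometry.angle (q - p) (r - p))
        (π - InnerProductGeometry.angle (q - p) (r - p))
      > 2 * arctan (1 / (6 * (n : ℝ) ^ 2)) := by
  set θ := angle (q - p) (r - p)
  have hsin : 1 ≤ 2 * (n : ℝ) ^ 2 * sin θ :=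
    EuclideanSpace.one_le_two_mul_sq_mul_sin_angle (IsGridPoint.exists_int_sub_apply hp hq)
      (IsGridPoint.exists_int_sub_apply hp hr) (IsGridPoint.abs_sub_apply_le hp hq)
      (IsGridPoint.abs_sub_apply_le hp hr) hli
  have hn : 0 < (n : ℝ) ^ 2 := by nlinarith [sin_le_one θ, sq_nonneg (n : ℝ)]
  calc 2 * arctan (1 / (6 * (n : ℝ) ^ 2)) ≤ 2 * (1 / (6 * (n : ℝ) ^ 2)) := by
        gcongr
        exact arctan_le_self (by positivity)
    _ < 1 / (2 * (n : ℝ) ^ 2) := by field_simp; gcongr; norm_num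
    _ ≤ sin θ := by rw [div_le_iff₀ (by positivity)]; linarith
    _ ≤ min θ (π - θ) := sin_le_min_self_pi_sub (angle_nonneg _ _) (angle_le_pi _ _)

/-- **Lemma 5.** In an `n × n` grid (`n ≥ 1`), if `p, q, r` are grid points such that
`q - p` and `r - p` are linearly independent, then the angle between the lines through
`p, q` and through `p, r` (namely `min θ (π - θ)` where `θ` is the angle between the
vectors `q - p` and `r - p`) is larger than `2 · arctan (1/(6n²))`. -/
theorem grid_line_angle_lower_bound (n : ℕ) (hn : 1 ≤ n)
    (p q r : EuclideanSpace ℝ (Fin 2))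
    (hp : ∀ i, ∃ k : ℤ, 0 ≤ k ∧ k ≤ (n : ℤ) ∧ p i = (k : ℝ))
    (hq : ∀ i, ∃ k : ℤ, 0 ≤ k ∧ k ≤ (n : ℤ) ∧ q i = (k : ℝ))
    (hr : ∀ i, ∃ k : ℤ, 0 ≤ k ∧ k ≤ (n : ℤ) ∧ r i = (k : ℝ))
    (hli : LinearIndependent ℝ ![q - p, r - p]) :
    min (InnerProductGeometry.angle (q - p) (r - p))
        (π - InnerProductGeometry.angle (q - p) (r - p))
      > 2 * arctan (1 / (6 * (n : ℝ) ^ 2)) :=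
  grid_line_angle_lower_bound_general n p q r hp hq hr hli
end

section
/- Let n ≥ 1 be an integer and let a, b, c, d be integers with 1 ≤ a ≤ n, 1 ≤ c ≤ n, 0 ≤ b ≤ a, 0 ≤ d ≤ c, and bc − ad ≥ 1. Then arctan((b : ℝ)/a) − arctan((d : ℝ)/c) ≥ arctan(1/(2n²)). -/
open Real

/-- The core estimate of Lemma 5: for integers `a, b, c, d` with `1 ≤ a ≤ n`,
`1 ≤ c ≤ n`, `0 ≤ b ≤ a`, `0 ≤ d ≤ c` and `bc - ad ≥ 1`, one has
`arctan (b/a) - arctan (d/c) ≥ arctan (1/(2n²))`. -/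
theorem arctan_slope_gap (n : ℤ) (hn : 1 ≤ n) (a b c d : ℤ)
    (ha1 : 1 ≤ a) (han : a ≤ n) (hc1 : 1 ≤ c) (hcn : c ≤ n)
    (hb0 : 0 ≤ b) (hba : b ≤ a) (hd0 : 0 ≤ d) (hdc : d ≤ c)
    (h : 1 ≤ b * c - a * d) :
    arctan ((b : ℝ) / a) - arctan ((d : ℝ) / c) ≥ arctan (1 / (2 * (n : ℝ) ^ 2)) := by
  have haR : (0:ℝ) < a := by exact_mod_cast ha1
  have hcR : (0:ℝ) < c := by exact_mod_cast hc1
  have hnR : (0:ℝ) < n := by exact_mod_cast hn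
  set x : ℝ := (b:ℝ) / a with hx
  set y : ℝ := (d:ℝ) / c with hy
  have hx0 : 0 ≤ x := div_nonneg (by exact_mod_cast hb0) haR.le
  have hy0 : 0 ≤ y := div_nonneg (by exact_mod_cast hd0) hcR.le
  have hx1 : x ≤ 1 := by
    rw [div_le_one haR]; exact_mod_cast hba
  have hy1 : y ≤ 1 := by
    rw [div_le_one hcR]; exact_mod_cast hdc
  have hxy : x * (-y) < 1 := lt_of_le_of_lt (by nlinarith) one_pos
  have key : arctan x - arctan y = arctan ((x - y) / (1 + x * y)) := by
    have := Real.arctan_add hxy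
    rw [Real.arctan_neg] at this
    rw [← sub_eq_add_neg] at this
    rw [this]; ring_nf
  rw [key]
  apply Real.arctan_strictMono.monotone
  have h2 : (0:ℝ) < 1 + x * y := by nlinarith
  have hxy2 : 1 + x * y ≤ 2 := by nlinarith
  have hdiff : (1:ℝ) / ((a:ℝ) * c) ≤ x - y := by
    rw [hx, hy, div_sub_div _ _ haR.ne' hcR.ne', div_le_div_iff₀ (by positivity) (by positivity)]
    have : (1:ℝ) ≤ (b:ℝ) * c - a * d := by exact_mod_cast h
    nlinarith [mul_pos haR hcR, mul_nonneg (by linarith : (0:ℝ) ≤ (b:ℝ)*c - a*d - 1) (mul_pos haR hcR).le]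
  have hac : (a:ℝ) * c ≤ (n:ℝ)^2 := by
    have haR' : (a:ℝ) ≤ n := by exact_mod_cast han
    have hcR' : (c:ℝ) ≤ n := by exact_mod_cast hcn
    nlinarith
  have h1 : (1:ℝ) / (2 * (n:ℝ)^2) ≤ (1 / ((a:ℝ)*c)) / 2 := by
    rw [div_div]
    apply one_div_le_one_div_of_le (by positivity)
    nlinarith
  calc (1:ℝ) / (2 * (n:ℝ)^2) ≤ (1 / ((a:ℝ)*c)) / 2 := h1
    _ ≤ (x - y) / 2 := by linarith [div_le_div_of_nonneg_right (c := (2:ℝ)) hdiff (by norm_num)]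
    _ ≤ (x - y) / (1 + x * y) := by
        have hpos : (0:ℝ) < 1 / ((a:ℝ)*c) := by positivity
        apply div_le_div_of_nonneg_left (by linarith) h2 hxy2
end

section
/- Let n ≥ 1 be an integer, let r > 0 be real, and set s = r·(√(36n⁴ + 1) − 1). Let u and v be unit vectors in ℝ² whose angle θ = arccos(⟨u, v⟩) satisfies 2·arctan(1/(6n²)) ≤ θ ≤ π. Then for all real t₁, t₂ ≥ s + r, the open balls of radius r centered at t₁·u and at t₂·v are disjoint; in fact ‖t₁·u − t₂·v‖ ≥ 2r. -/
open Real RealInnerProductSpace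

/-- With `s = r · (√(36n⁴+1) - 1)`, unit disks of radius `r` placed on two rays from a
common vertex making an angle of at least `2 · arctan (1/(6n²))`, each at distance at
least `s + r` from the vertex, are disjoint; their centers are at distance at least
`2r`. -/
theorem hallway_disks_disjoint (n : ℕ) (hn : 1 ≤ n) (r : ℝ) (hr : 0 < r)
    (s : ℝ) (hs : s = r * (Real.sqrt (36 * (n : ℝ) ^ 4 + 1) - 1))
    (u v : EuclideanSpace ℝ (Fin 2)) (hu : ‖u‖ = 1) (hv : ‖v‖ = 1)
    (hangle₁ : 2 * arctan (1 / (6 * (n : ℝ) ^ 2)) ≤ Real.arccos ⟪u, v⟫)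
    (hangle₂ : Real.arccos ⟪u, v⟫ ≤ π)
    (t₁ t₂ : ℝ) (ht₁ : s + r ≤ t₁) (ht₂ : s + r ≤ t₂) :
    Disjoint (Metric.ball (t₁ • u) r) (Metric.ball (t₂ • v) r) ∧
      ‖t₁ • u - t₂ • v‖ ≥ 2 * r := by
  have hN : (1:ℝ) ≤ (n:ℝ) := by exact_mod_cast hn
  have hN2 : (0:ℝ) < (n:ℝ)^2 := by positivity
  set x : ℝ := 1 / (6 * (n : ℝ) ^ 2) with hx
  have hxpos : 0 < x := by positivity
  set M : ℝ := 36 * (n : ℝ) ^ 4 + 1 with hM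
  have hMpos : (0:ℝ) < M := by positivity
  clear_value x M
  -- sin (arctan x) ^ 2 = 1 / M
  have hsin : Real.sin (Real.arctan x) ^ 2 = 1 / M := by
    rw [Real.sin_arctan, div_pow, Real.sq_sqrt (by positivity : (0:ℝ) ≤ 1 + x ^ 2),
      hx, hM]
    field_simp
    ring
  -- cos (2 arctan x) = 1 - 2 / M
  have hcos2 : Real.cos (2 * Real.arctan x) = 1 - 2 / M := by
    have hpyth := Real.sin_sq_add_cos_sq (Real.arctan x)
    have h2M : 2 / M = 2 * (1 / M) := by ring
    rw [Real.cos_two_mul]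
    linarith [hsin]
  -- inner product bound
  have hCS : |⟪u, v⟫| ≤ 1 := by
    calc |⟪u, v⟫| ≤ ‖u‖ * ‖v‖ := abs_real_inner_le_norm u v
    _ = 1 := by rw [hu, hv]; ring
  have h1 : -1 ≤ ⟪u, v⟫ := (abs_le.mp hCS).1
  have h2 : ⟪u, v⟫ ≤ 1 := (abs_le.mp hCS).2
  have hmono : Real.cos (Real.arccos ⟪u, v⟫) ≤ Real.cos (2 * Real.arctan x) :=
    Real.cos_le_cos_of_nonneg_of_le_pi
      (mul_nonneg (by norm_num) ((by simpa [Real.arctan_zero] using (Real.arctan_strictMono hxpos).le : (0:ℝ) ≤ Real.arctan x))) hangle₂ hangle₁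
  have hinner : ⟪u, v⟫ ≤ 1 - 2 / M := by
    rwa [Real.cos_arccos h1 h2, hcos2] at hmono
  -- distance bound
  have hsr : s + r = r * Real.sqrt M := by rw [hs, hM]; ring
  have hsq : Real.sqrt M ^ 2 = M := Real.sq_sqrt hMpos.le
  have hsrpos : 0 < s + r := by rw [hsr]; positivity
  have hnormsq : ‖t₁ • u - t₂ • v‖ ^ 2 = t₁ ^ 2 + t₂ ^ 2 - 2 * (t₁ * t₂) * ⟪u, v⟫ := by
    rw [@norm_sub_sq_real, real_inner_smul_left, real_inner_smul_right,
      norm_smul, norm_smul, hu, hv]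
    simp [abs_mul_abs_self, mul_pow, sq_abs]
    ring
  have hkey : 2 * r ≤ ‖t₁ • u - t₂ • v‖ := by
    have ht₁t₂ : (s + r) * (s + r) ≤ t₁ * t₂ :=
      mul_le_mul ht₁ ht₂ hsrpos.le (le_trans hsrpos.le ht₁)
    have hsr2 : (s + r) * (s + r) = r ^ 2 * M := by
      calc (s + r) * (s + r) = r ^ 2 * Real.sqrt M ^ 2 := by rw [hsr]; ring
      _ = r ^ 2 * M := by rw [hsq]
    have hc := mul_le_mul_of_nonneg_left hinner
      (show (0:ℝ) ≤ 2 * (t₁ * t₂) by nlinarith [hsrpos, ht₁, ht₂])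
    have hd : r ^ 2 * M * (2 / M) ≤ t₁ * t₂ * (2 / M) :=
      mul_le_mul_of_nonneg_right (hsr2 ▸ ht₁t₂) (by positivity)
    have he : r ^ 2 * M * (2 / M) = 2 * r ^ 2 := by field_simp
    have hsqle : (2 * r) ^ 2 ≤ ‖t₁ • u - t₂ • v‖ ^ 2 := by
      rw [hnormsq]
      linarith [sq_nonneg (t₁ - t₂), hc, hd, he]
    exact le_of_pow_le_pow_left₀ two_ne_zero (norm_nonneg _) hsqle
  refine ⟨Metric.ball_disjoint_ball ?_, hkey⟩
  rw [dist_eq_norm]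
  linarith [hkey]
end

section
/- Let n ≥ 2 be an integer and set r = 1/(40n⁴), h = 1/(12n²), s = r·(√(36n⁴ + 1) − 1), and a = 1/4 (as real numbers). Then ⌈(√2·n − 2s)/(2r)⌉ − 2·⌈a/(2r)⌉ ≤ ⌊h/(2r)⌋ · ⌊(1 − 2(s + a))/(2r) − 1⌋, where ⌈·⌉ and ⌊·⌋ denote the integer ceiling and floor of a real number. -/
/-!
With `N = n` and `q = √(36N⁴ + 1)` the four quotients are explicit:
`a/(2r) = 5N⁴` is an integer, `(√2·N - 2s)/(2r) = 20√2·N⁵ - q + 1`, `h/(2r) = 5N²/3` and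
`(1 - 2(s + a))/(2r) - 1 = 10N⁴ - q`. Since `6N² < q < 6N² + 1`, the left side is about
`28.3·N⁵` while the product of floors is at least `(5N²/3 - 1)(10N⁴ - 6N² - 2) ≈ 16.7·N⁶`,
which wins already at `N = 2` once `√2 < 1.415`.
-/

open Real

theorem Int.ceil_le_floor_mul_floor {R : Type*} [Ring R] [LinearOrder R] [FloorRing R]
    [IsOrderedRing R] {x y z : R} (hy : 1 ≤ y) (hz : 1 ≤ z)
    (h : x ≤ (y - 1) * (z - 1)) : ⌈x⌉ ≤ ⌊y⌋ * ⌊z⌋ := by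
  rw [Int.ceil_le, Int.cast_mul]
  calc x ≤ (y - 1) * (z - 1) := h
    _ ≤ ⌊y⌋ * ⌊z⌋ :=
      mul_le_mul (Int.sub_one_lt_floor y).le (Int.sub_one_lt_floor z).le
        (sub_nonneg.2 hz) (by exact_mod_cast Int.floor_nonneg.2 (zero_le_one.trans hy))

theorem Real.lt_sqrt_sq_add_one {t : ℝ} (ht : 0 ≤ t) : t < √(t ^ 2 + 1) :=
  (Real.lt_sqrt ht).2 (lt_add_one _)

theorem Real.sqrt_sq_add_one_lt {t : ℝ} (ht : 0 < t) : √(t ^ 2 + 1) < t + 1 :=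
  (Real.sqrt_lt' (by linarith)).2 (by nlinarith)

theorem Real.sqrt_two_lt_1415 : √2 < 1.415 :=
  (Real.sqrt_lt' (by norm_num)).2 (by norm_num)

theorem sextic_ge_quintic {x : ℝ} (hx : 2 ≤ x) :
    20 * 1.415 * x ^ 5 - 6 * x ^ 2 + 1 - 10 * x ^ 4
      ≤ (5 * x ^ 2 / 3 - 1) * (10 * x ^ 4 - 6 * x ^ 2 - 2) := by
  have hx0 : 0 ≤ x := by linarith
  nlinarith [pow_le_pow_left₀ (by norm_num) hx 5, mul_nonneg (sub_nonneg.2 hx) (pow_nonneg hx0 5),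
    pow_nonneg hx0 4, sq_nonneg x]

theorem path_length_le_cabin_capacity {N q : ℝ} (hN : 2 ≤ N) (hq : 6 * N ^ 2 < q)
    (hq' : q < 6 * N ^ 2 + 1) :
    20 * √2 * N ^ 5 - q + 1 - 10 * N ^ 4 ≤ (5 * N ^ 2 / 3 - 1) * (10 * N ^ 4 - q - 1) := by
  have hN5 : 20 * √2 * N ^ 5 ≤ 20 * 1.415 * N ^ 5 := by
    gcongr
    exact Real.sqrt_two_lt_1415.le
  have hcabin : (5 * N ^ 2 / 3 - 1) * (10 * N ^ 4 - 6 * N ^ 2 - 2)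
      ≤ (5 * N ^ 2 / 3 - 1) * (10 * N ^ 4 - q - 1) :=
    mul_le_mul_of_nonneg_left (by linarith) (by nlinarith)
  linarith [sextic_ge_quintic hN]

/-- Constraint (5) of the gadget construction holds for `r = 1/(40n⁴)`,
`h = 1/(12n²)`, `s = r · (√(36n⁴+1) - 1)` and `a = 1/4`, for every `n ≥ 2`:
`⌈(√2·n - 2s)/(2r)⌉ - 2·⌈a/(2r)⌉ ≤ ⌊h/(2r)⌋ · ⌊(1 - 2(s + a))/(2r) - 1⌋`. -/
theorem gadget_constraint_five (n : ℕ) (hn : 2 ≤ n)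
    (r h s a : ℝ)
    (hr : r = 1 / (40 * (n : ℝ) ^ 4))
    (hh : h = 1 / (12 * (n : ℝ) ^ 2))
    (hs : s = r * (Real.sqrt (36 * (n : ℝ) ^ 4 + 1) - 1))
    (ha : a = 1 / 4) :
    ⌈(Real.sqrt 2 * n - 2 * s) / (2 * r)⌉ - 2 * ⌈a / (2 * r)⌉
      ≤ ⌊h / (2 * r)⌋ * ⌊(1 - 2 * (s + a)) / (2 * r) - 1⌋ := by
  have hN : (2 : ℝ) ≤ n := by exact_mod_cast hn
  have hn2 : 4 ≤ (n : ℝ) ^ 2 := by nlinarith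
  have hq_sq : 36 * (n : ℝ) ^ 4 + 1 = (6 * (n : ℝ) ^ 2) ^ 2 + 1 := by ring
  have hq : 6 * (n : ℝ) ^ 2 < √(36 * (n : ℝ) ^ 4 + 1) := by
    rw [hq_sq]; exact Real.lt_sqrt_sq_add_one (by positivity)
  have hq' : √(36 * (n : ℝ) ^ 4 + 1) < 6 * (n : ℝ) ^ 2 + 1 := by
    rw [hq_sq]; exact Real.sqrt_sq_add_one_lt (by positivity)
  set q := √(36 * (n : ℝ) ^ 4 + 1)
  have hn0 : (n : ℝ) ≠ 0 := by positivity
  have ha' : a / (2 * r) = ((5 * n ^ 4 : ℕ) : ℤ) := by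
    rw [ha, hr]; push_cast; field_simp; ring
  have hpath : (√2 * n - 2 * s) / (2 * r) = 20 * √2 * (n : ℝ) ^ 5 - q + 1 := by
    rw [hs, hr]; field_simp; ring
  have hh' : h / (2 * r) = 5 * (n : ℝ) ^ 2 / 3 := by rw [hh, hr]; field_simp; ring
  have hcabin : (1 - 2 * (s + a)) / (2 * r) - 1 = 10 * (n : ℝ) ^ 4 - q := by
    rw [hs, hr, ha]; field_simp; ring
  rw [ha', Int.ceil_intCast, hpath, hh', hcabin, ← Int.ceil_sub_intCast]
  refine Int.ceil_le_floor_mul_floor (by linarith) (by nlinarith) ?_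
  push_cast
  linarith [path_length_le_cabin_capacity hN hq hq']
end

section
/- For every integer n ≥ 2, n · ⌈π·(√(36n⁴ + 1) − 1)⌉ < ⌈20√2·n⁵ − √(36n⁴ + 1) + 1⌉, where ⌈·⌉ denotes the integer ceiling of a real number. -/
/-- For every `n ≥ 2`, the total number `n · C_V` of disks in all vertex gadgets,
where `C_V = ⌈π·(√(36n⁴+1) - 1)⌉`, is smaller than the number
`C_E = ⌈20√2·n⁵ - √(36n⁴+1) + 1⌉` of disks in a single edge gadget. -/
theorem vertex_disks_lt_edge_disks (n : ℕ) (hn : 2 ≤ n) :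
    (n : ℤ) * ⌈Real.pi * (Real.sqrt (36 * (n : ℝ) ^ 4 + 1) - 1)⌉
      < ⌈20 * Real.sqrt 2 * (n : ℝ) ^ 5 - Real.sqrt (36 * (n : ℝ) ^ 4 + 1) + 1⌉ := by
  have hn2 : (2 : ℝ) ≤ (n : ℝ) := by exact_mod_cast hn
  have hn4 : (16 : ℝ) ≤ (n : ℝ) ^ 4 := by
    calc (16:ℝ) = 2 ^ 4 := by norm_num
      _ ≤ (n:ℝ) ^ 4 := pow_le_pow_left₀ (by norm_num) hn2 4
  set s : ℝ := Real.sqrt (36 * (n : ℝ) ^ 4 + 1) with hs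
  have hs_le : s ≤ 7 * (n : ℝ) ^ 2 := by
    rw [hs, show (7 : ℝ) * (n : ℝ) ^ 2 = Real.sqrt ((7 * (n : ℝ) ^ 2) ^ 2) from
      (Real.sqrt_sq (by positivity)).symm]
    exact Real.sqrt_le_sqrt (by nlinarith)
  have hs_sq : s ^ 2 = 36 * (n : ℝ) ^ 4 + 1 := Real.sq_sqrt (by positivity)
  have hs_nn : 0 ≤ s := Real.sqrt_nonneg _
  have hs_ge : (1 : ℝ) ≤ s := by nlinarith
  have hsqrt2 : (1.4 : ℝ) ≤ Real.sqrt 2 := by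
    nlinarith [Real.sq_sqrt (by norm_num : (0:ℝ) ≤ 2), Real.sqrt_nonneg 2]
  have hpi : Real.pi < 3.141593 := Real.pi_lt_d6
  have hceil1 : ⌈Real.pi * (s - 1)⌉ ≤ (22 * (n : ℤ) ^ 2) := by
    apply Int.ceil_le.mpr
    push_cast
    nlinarith [Real.pi_pos, mul_le_mul hpi.le hs_le hs_nn (by norm_num : (0:ℝ) ≤ 3.141593)]
  have hA : 0 ≤ (n : ℝ) ^ 3 * ((n : ℝ) ^ 2 - 4) := by
    apply mul_nonneg (by positivity); nlinarith
  have hB : 0 ≤ (n : ℝ) ^ 2 * ((n : ℝ) ^ 3 - 8) := by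
    apply mul_nonneg (by positivity); nlinarith
  have hceil2 : (22 * (n : ℤ) ^ 3) < ⌈20 * Real.sqrt 2 * (n : ℝ) ^ 5 - s + 1⌉ := by
    apply Int.lt_ceil.mpr
    push_cast
    nlinarith [mul_le_mul_of_nonneg_right hsqrt2 (by positivity : (0:ℝ) ≤ 20 * (n:ℝ)^5)]
  calc (n : ℤ) * ⌈Real.pi * (s - 1)⌉ ≤ (n : ℤ) * (22 * (n : ℤ) ^ 2) := by
        apply mul_le_mul_of_nonneg_left hceil1 (by positivity)
    _ = 22 * (n : ℤ) ^ 3 := by ring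
    _ < _ := hceil2
end
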